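/- Let S and T be subsets of ω₁ such that cl(S) \ S is unbounded in ω₁, S is stationary, and the symmetric difference S Δ T is non-stationary. Then K(S) ≥_T K(T). -/

import Mathlib

/-!
Choose a cub set `C` on which `S` and `T` agree and whose points are limits of points `λ ∈ S`
that are themselves limits of points of `cl(S) \ S` (possible because `S` is stationary and
`cl(S) \ S` is unbounded). The points of `C` cut `ω₁` into countable blocks.

In a block, a compact `L ⊆ T` lies in a compact `M_f ⊆ T` as soon as `f : ℕ → ℕ` dominates an
index recording how close `L` comes to each of the countably many points of `cl(T) \ T` there.
The function `f` is written into `S` using some `λ` in the block: below the `n`-th term `δₙ` of a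
sequence of points of `cl(S) \ S` converging to `λ`, take the first `f n` terms of a sequence
in `S` converging to `δₙ`, and add `λ`. This set is compact, and a compact `K ⊆ S` can only
contain finitely many points below each `δₙ ∉ S`, so `K` bounds every `f` written into it.

Sending `L` to `L ∩ C` together with these codes, one per block met by `L`, is a map
`K(T) → K(S)` under which the preimage of every bounded set is bounded.
-/

open Cardinal Set

universe u v

/-- `C` is cofinal for `P'` in `P`: every element of `P'` lies below some element of `C`. -/
def IsCofinalFor' {P : Type u} [Preorder P] (P' C : Set P) : Prop :=
  ∀ p ∈ P', ∃ c ∈ C, p ≤ c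

/-- `φ : P → Q` is a relative Tukey quotient from `(P', P)` to `(Q', Q)`:
it maps every subset of `P` cofinal for `P'` to a subset of `Q` cofinal for `Q'`. -/
def IsRelTukeyQuotient {P : Type u} {Q : Type v} [Preorder P] [Preorder Q]
    (P' : Set P) (Q' : Set Q) (φ : P → Q) : Prop :=
  ∀ C : Set P, IsCofinalFor' P' C → IsCofinalFor' Q' (φ '' C)

/-- `(P', P) ≥_T (Q', Q)`: there exists a relative Tukey quotient. -/
def RelTukeyGE {P : Type u} {Q : Type v} [Preorder P] [Preorder Q]
    (P' : Set P) (Q' : Set Q) : Prop :=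
  ∃ φ : P → Q, IsRelTukeyQuotient P' Q' φ

/-- `P ≥_T Q`: there is a Tukey quotient from `P` to `Q`. -/
def TukeyGE (P : Type u) (Q : Type v) [Preorder P] [Preorder Q] : Prop :=
  RelTukeyGE (Set.univ : Set P) (Set.univ : Set Q)

/-- `A` is unbounded in `P`: it has no upper bound in `P`. -/
def UnboundedIn {P : Type u} [Preorder P] (A : Set P) : Prop :=
  ¬ ∃ b : P, ∀ a ∈ A, a ≤ b

noncomputable section

/-- `ω₁`: the set of countable ordinals, as the canonical well-order of order type `ω₁`. -/
def O1 : Type := (Cardinal.aleph 1).ord.ToType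

noncomputable instance : LinearOrder O1 :=
  inferInstanceAs (LinearOrder (Cardinal.aleph 1).ord.ToType)

/-- `ω₁` carries its order topology. -/
instance : TopologicalSpace O1 := Preorder.topology O1

instance : OrderTopology O1 := ⟨rfl⟩

/-- `K(S)` for `S ⊆ ω₁`: the compact subsets of `S` (equivalently, compact subsets of `ω₁`
contained in `S`), ordered by inclusion. -/
def KS (S : Set O1) : Type := {K : Set O1 // K ⊆ S ∧ IsCompact K}

instance (S : Set O1) : PartialOrder (KS S) := Subtype.partialOrder _

/-- `A ⊆ ω₁` is bounded in `ω₁`. -/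
def BddO1 (A : Set O1) : Prop := ∃ β : O1, ∀ x ∈ A, x ≤ β

/-- `C ⊆ ω₁` is cub: closed in the order topology and unbounded in `ω₁`. -/
def IsCub (C : Set O1) : Prop := IsClosed C ∧ ¬ BddO1 C

/-- `S ⊆ ω₁` is stationary: it meets every cub set. -/
def IsStat (S : Set O1) : Prop := ∀ C : Set O1, IsCub C → (S ∩ C).Nonempty

open Filter Topology

lemma accPt_of_mem_closure_sdiff {X : Type*} [TopologicalSpace X] {A : Set X} {z : X}
    (hz : z ∈ closure A \ A) : AccPt z (𝓟 A) := by
  simpa [closure_eq_self_union_derivedSet, hz.2] using hz.1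

lemma StrictMono.lt_ciSup {α : Type*} [ConditionallyCompleteLattice α] {u : ℕ → α}
    (hu : StrictMono u) (hbdd : BddAbove (range u)) (n : ℕ) : u n < ⨆ n, u n :=
  (hu n.lt_succ_self).trans_le (le_ciSup hbdd _)

section SuccOrder

variable {α : Type*} [ConditionallyCompleteLinearOrder α] [TopologicalSpace α] [OrderTopology α]
  [SuccOrder α] [NoMaxOrder α]

lemma exists_seq_strictMono_tendsto_of_accPt [FirstCountableTopology α] {A : Set α} {x y : α}
    (hx : AccPt x (𝓟 A)) (hy : y < x) :
    ∃ u : ℕ → α, StrictMono u ∧ (∀ n, u n ∈ A ∩ Ioo y x) ∧ Tendsto u atTop (𝓝 x) := by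
  have hlub : IsLUB (A ∩ Ioo y x) x := by
    refine ⟨fun z hz => hz.2.2.le, fun b hb => not_lt.mp fun hbx => ?_⟩
    obtain ⟨z, hzA, hbz, hzx⟩ := (SuccOrder.accPt_principal.mp hx).2 (max b y) (max_lt hbx hy)
    exact (hb ⟨hzA, (le_max_right _ _).trans_lt hbz, hzx⟩).not_gt ((le_max_left _ _).trans_lt hbz)
  have hne : (A ∩ Ioo y x).Nonempty := (SuccOrder.accPt_principal.mp hx).2 y hy
  obtain ⟨u, hu, -, hlim, hmem⟩ :=
    hlub.exists_seq_strictMono_tendsto_of_notMem (fun h => h.2.2.false) hne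
  exact ⟨u, hu, hmem, hlim⟩

lemma StrictMono.ciSup_mem_derivedSet {A : Set α} {u : ℕ → α} (hu : StrictMono u)
    (hbdd : BddAbove (range u)) (hA : ∀ n, ∃ m ≥ n, u m ∈ A) : ⨆ n, u n ∈ derivedSet A := by
  refine SuccOrder.accPt_principal.mpr ⟨not_isMin_iff.mpr ⟨u 0, hu.lt_ciSup hbdd 0⟩, fun b hb => ?_⟩
  obtain ⟨n, hn⟩ := (lt_ciSup_iff hbdd).mp hb
  obtain ⟨m, hmn, hm⟩ := hA n
  exact ⟨u m, hm, hn.trans_le (hu.monotone hmn), hu.lt_ciSup hbdd m⟩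

end SuccOrder

lemma exists_strictMono_forall_mem {α : Type*} [LinearOrder α] {A : ℕ → Set α}
    (hA : ∀ n, ¬ BddAbove (A n)) (b : α) :
    ∃ u : ℕ → α, StrictMono u ∧ b < u 0 ∧ ∀ n, u n ∈ A n := by
  choose next hnext using fun n x => not_bddAbove_iff.mp (hA n) x
  let u : ℕ → α := fun n => Nat.rec (next 0 b) (fun n x => next (n + 1) x) n
  have hu : ∀ n, u n ∈ A n := fun n => by cases n <;> exact (hnext _ _).1
  exact ⟨u, strictMono_nat_of_lt_succ fun n => (hnext (n + 1) (u n)).2, (hnext 0 b).2, hu⟩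

theorem tukeyGE_of_bddAbove_setOf_le {P Q : Type*} [Preorder P] [Preorder Q] (g : Q → P)
    (hg : ∀ p, BddAbove {q | g q ≤ p}) : TukeyGE P Q := by
  choose φ hφ using hg
  refine ⟨φ, fun D hD q _ => ?_⟩
  obtain ⟨p, hpD, hqp⟩ := hD (g q) trivial
  exact ⟨φ p, mem_image_of_mem φ hpD, hφ p hqp⟩

namespace O1

instance : WellFoundedLT O1 := inferInstanceAs (WellFoundedLT (Cardinal.aleph 1).ord.ToType)

lemma mk_eq_aleph_one : #O1 = ℵ₁ := by
  show #(Cardinal.aleph 1).ord.ToType = _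
  rw [Cardinal.mk_toType, Cardinal.card_ord]

lemma countable_Iio (x : O1) : (Iio x).Countable := by
  rw [← Cardinal.le_aleph0_iff_set_countable, ← Cardinal.lt_aleph_one_iff, ← mk_eq_aleph_one]
  refine Cardinal.mk_Iio_lt x ?_
  rw [mk_eq_aleph_one]
  exact (Ordinal.type_toType _).symm

lemma not_countable_univ : ¬ (univ : Set O1).Countable := by
  rw [← Cardinal.le_aleph0_iff_set_countable, Cardinal.mk_univ, mk_eq_aleph_one]
  exact Cardinal.aleph0_lt_aleph_one.not_ge

lemma bddAbove_of_countable {A : Set O1} (hA : A.Countable) : BddAbove A := by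
  by_contra h
  refine not_countable_univ ((hA.biUnion fun a _ => countable_Iio a).mono fun y _ => ?_)
  obtain ⟨a, ha, hya⟩ := not_bddAbove_iff.mp h y
  exact mem_biUnion ha hya

lemma bddAbove_range (u : ℕ → O1) : BddAbove (range u) := bddAbove_of_countable (countable_range u)

instance : Nonempty O1 := by
  by_contra h
  have := not_nonempty_iff.mp h
  exact not_countable_univ (Set.to_countable _)

instance : NoMaxOrder O1 :=
  ⟨fun x => by
    by_contra! h
    exact not_countable_univ ((countable_Iio x).insert x |>.mono fun y _ => by
      simpa [le_iff_eq_or_lt] using h y)⟩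

instance : OrderBot O1 := WellFoundedLT.toOrderBot O1

instance : ConditionallyCompleteLinearOrderBot O1 :=
  WellFoundedLT.conditionallyCompleteLinearOrderBot O1

instance : SuccOrder O1 := SuccOrder.ofLinearWellFoundedLT O1

instance : FirstCountableTopology O1 where
  nhds_generated_countable x := by
    by_cases hx : IsMin x
    · rw [SuccOrder.nhds_of_isMin hx]
      exact isCountablyGenerated_pure x
    · exact HasCountableBasis.isCountablyGenerated
        ⟨SuccOrder.hasBasis_nhds_Ioc_of_exists_lt (not_isMin_iff.mp hx), countable_Iio x⟩

lemma isCompact_iff_isClosed_bddAbove {K : Set O1} : IsCompact K ↔ IsClosed K ∧ BddAbove K := by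
  refine ⟨fun hK => ⟨hK.isClosed, hK.bddAbove⟩, fun ⟨hK, b, hb⟩ => ?_⟩
  exact isCompact_Icc.of_isClosed_subset hK fun x hx => ⟨bot_le, hb hx⟩

lemma isOpen_Ioc (a b : O1) : IsOpen (Ioc a b) := Order.Ioo_succ_right a b ▸ isOpen_Ioo

lemma countable_Iic (b : O1) : (Iic b).Countable := Order.Iio_succ b ▸ countable_Iio _

lemma isClosed_Ioi (a : O1) : IsClosed (Ioi a) := Order.Ici_succ a ▸ isClosed_Ici

lemma not_bddAbove_derivedSet {A : Set O1} (hA : ¬ BddAbove A) : ¬ BddAbove (derivedSet A) := by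
  refine not_bddAbove_iff.mpr fun b => ?_
  obtain ⟨u, hu, hbu, huA⟩ := exists_strictMono_forall_mem (fun _ => hA) b
  exact ⟨_, hu.ciSup_mem_derivedSet (bddAbove_range u) fun n => ⟨n, le_rfl, huA n⟩,
    hbu.trans (hu.lt_ciSup (bddAbove_range u) 0)⟩

lemma isCub_derivedSet {A : Set O1} (hA : ¬ BddAbove A) : IsCub (derivedSet A) :=
  ⟨isClosed_derivedSet A, not_bddAbove_derivedSet hA⟩

lemma _root_.IsCub.inter {C D : Set O1} (hC : IsCub C) (hD : IsCub D) : IsCub (C ∩ D) := by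
  refine ⟨hC.1.inter hD.1, not_bddAbove_iff.mpr fun b => ?_⟩
  obtain ⟨u, hu, hbu, huA⟩ := exists_strictMono_forall_mem (A := fun n => if Even n then C else D)
    (fun n => by split_ifs; exacts [hC.2, hD.2]) b
  have hmem (E : Set O1) (hE : IsClosed E) (k : ℕ) (hk : ∀ n, u (2 * n + k) ∈ E) :
      ⨆ n, u n ∈ E :=
    (isClosed_iff_derivedSet_subset E).mp hE <|
      hu.ciSup_mem_derivedSet (bddAbove_range u) fun n => ⟨2 * n + k, by omega, hk n⟩
  refine ⟨_, ⟨hmem C hC.1 0 fun n => ?_, hmem D hD.1 1 fun n => ?_⟩,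
    hbu.trans (hu.lt_ciSup (bddAbove_range u) 0)⟩
  · simpa using huA (2 * n)
  · simpa [Nat.even_add_one] using huA (2 * n + 1)

lemma _root_.IsCub.inter_Ici {C : Set O1} (hC : IsCub C) (b : O1) : IsCub (C ∩ Ici b) := by
  refine ⟨hC.1.inter isClosed_Ici, not_bddAbove_iff.mpr fun a => ?_⟩
  obtain ⟨c, hc, hac⟩ := not_bddAbove_iff.mp hC.2 (max a b)
  exact ⟨c, ⟨hc, (le_max_right _ _).trans hac.le⟩, (le_max_left _ _).trans_lt hac⟩

lemma _root_.IsStat.not_bddAbove_inter {S C : Set O1} (hS : IsStat S) (hC : IsCub C) :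
    ¬ BddAbove (S ∩ C) := by
  refine not_bddAbove_iff.mpr fun b => ?_
  obtain ⟨x, hxS, hxC, hbx⟩ := hS _ (hC.inter_Ici (Order.succ b))
  exact ⟨x, ⟨hxS, hxC⟩, Order.succ_le_iff.mp hbx⟩

section Block

def ceil (C : Set O1) (x : O1) : O1 := sInf (C ∩ Ici x)

/-- For `c ∈ C`, the fibre of `ceil C` over `c`. -/
def block (C : Set O1) (c : O1) : Set O1 := {x | x ≤ c ∧ ∀ d ∈ C, d < c → d < x}

variable {C : Set O1} {c d x : O1}

lemma ceil_mem_inter (hC : ¬ BddAbove C) (x : O1) : ceil C x ∈ C ∩ Ici x := by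
  obtain ⟨c, hc, hxc⟩ := not_bddAbove_iff.mp hC x
  exact csInf_mem ⟨c, hc, hxc.le⟩

lemma ceil_mem (hC : ¬ BddAbove C) (x : O1) : ceil C x ∈ C := (ceil_mem_inter hC x).1

lemma le_ceil (hC : ¬ BddAbove C) (x : O1) : x ≤ ceil C x := (ceil_mem_inter hC x).2

lemma ceil_le (hd : d ∈ C) (hxd : x ≤ d) : ceil C x ≤ d := csInf_le (OrderBot.bddBelow _) ⟨hd, hxd⟩

lemma ceil_mono (hC : ¬ BddAbove C) : Monotone (ceil C) := fun _ y hxy =>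
  ceil_le (ceil_mem hC y) (hxy.trans (le_ceil hC y))

lemma mem_block_ceil (hC : ¬ BddAbove C) (x : O1) : x ∈ block C (ceil C x) :=
  ⟨le_ceil hC x, fun _ hd hdc => lt_of_not_ge fun hdx => (ceil_le hd hdx).not_gt hdc⟩

lemma ceil_eq_of_mem_block (hC : ¬ BddAbove C) (hc : c ∈ C) (hx : x ∈ block C c) :
    ceil C x = c :=
  (ceil_le hc hx.1).antisymm <| not_lt.mp fun h => (hx.2 _ (ceil_mem hC x) h).not_ge (le_ceil hC x)

lemma ceil_eq_self (hC : ¬ BddAbove C) (hc : c ∈ C) : ceil C c = c :=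
  (ceil_le hc le_rfl).antisymm (le_ceil hC c)

lemma isClosed_block (C : Set O1) (c : O1) : IsClosed (block C c) := by
  have : block C c = Iic c ∩ ⋂ d ∈ C ∩ Iio c, Ioi d := by
    ext x; simp [block, and_imp]
  rw [this]
  exact isClosed_Iic.inter (isClosed_biInter fun d _ => isClosed_Ioi d)

lemma mem_block_of_lt (hx : x ∈ block C c) (hxy : x < d) (hdc : d ≤ c) : d ∈ block C c :=
  ⟨hdc, fun e he hec => (hx.2 e he hec).trans hxy⟩

end Block

section UnionOfBlocks

variable {C W I : Set O1} {Q : O1 → Set O1}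

lemma mem_inter_or_ceil_mem_of_mem_union (hC : ¬ BddAbove C) (hI : I ⊆ C)
    (hQC : ∀ c ∈ I, Q c ⊆ block C c) {z : O1} (hz : z ∈ W ∩ C ∪ ⋃ c ∈ I, Q c) :
    z ∈ W ∩ C ∨ ceil C z ∈ I ∧ z ∈ Q (ceil C z) := by
  rcases hz with hz | hz
  · exact .inl hz
  · obtain ⟨c, hc, hzc⟩ := mem_iUnion₂.mp hz
    rw [ceil_eq_of_mem_block hC (hI hc) (hQC c hc hzc)]
    exact .inr ⟨hc, hzc⟩

lemma mem_inter_of_forall_exists_ceil_lt (hC : IsCub C) (hW : IsClosed W) (hI : I ⊆ C)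
    (hQC : ∀ c ∈ I, Q c ⊆ block C c) (hIW : ∀ c ∈ I, (W ∩ block C c).Nonempty) {μ : O1}
    (hμ : ¬ IsMin μ) (hlt : ∀ y < μ, ∃ z ∈ W ∩ C ∪ ⋃ c ∈ I, Q c, y < z ∧ ceil C z < μ) :
    μ ∈ W ∩ C := by
  have hμC : μ ∈ C := (isClosed_iff_derivedSet_subset C).mp hC.1 <|
    SuccOrder.accPt_principal.mpr ⟨hμ, fun y hy => by
      obtain ⟨z, -, hyz, hz⟩ := hlt y hy
      exact ⟨ceil C z, ceil_mem hC.2 z, hyz.trans_le (le_ceil hC.2 z), hz⟩⟩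
  refine ⟨(isClosed_iff_derivedSet_subset W).mp hW <|
    SuccOrder.accPt_principal.mpr ⟨hμ, fun y hy => ?_⟩, hμC⟩
  obtain ⟨z₁, -, hyz₁, hz₁⟩ := hlt y hy
  have hyc : y < ceil C z₁ := hyz₁.trans_le (le_ceil hC.2 z₁)
  obtain ⟨z, hzM, hz₁z, hz⟩ := hlt _ hz₁
  rcases mem_inter_or_ceil_mem_of_mem_union hC.2 hI hQC hzM with hzW | ⟨hcI, -⟩
  · exact ⟨z, hzW.1, hyc.trans hz₁z, (le_ceil hC.2 z).trans_lt hz⟩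
  · obtain ⟨w, hwW, hw⟩ := hIW _ hcI
    exact ⟨w, hwW, hyc.trans (hw.2 _ (ceil_mem hC.2 z₁) (hz₁z.trans_le (le_ceil hC.2 z))),
      hw.1.trans_lt hz⟩

lemma isClosed_inter_union_biUnion (hC : IsCub C) (hW : IsClosed W) (hI : I ⊆ C)
    (hQ : ∀ c ∈ I, IsClosed (Q c)) (hQC : ∀ c ∈ I, Q c ⊆ block C c)
    (hIW : ∀ c ∈ I, (W ∩ block C c).Nonempty) : IsClosed (W ∩ C ∪ ⋃ c ∈ I, Q c) := by
  set M := W ∩ C ∪ ⋃ c ∈ I, Q c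
  refine (isClosed_iff_derivedSet_subset M).mpr fun μ hμ => ?_
  obtain ⟨hμmin, hμM⟩ := SuccOrder.accPt_principal.mp hμ
  by_cases hblock : ∃ y < μ, ∀ z ∈ M, z ∈ Ioo y μ → ceil C z = ceil C μ
  · -- near `μ`, all of `M` lies in the single closed set `Q (ceil C μ)`
    obtain ⟨y, hyμ, hy⟩ := hblock
    have hQμ : ∀ z ∈ M, z ∈ Ioo y μ → ceil C μ ∈ I ∧ z ∈ Q (ceil C μ) := by
      intro z hzM hz
      rcases mem_inter_or_ceil_mem_of_mem_union hC.2 hI hQC hzM with hzC | hzQ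
      · have hzμ := ceil_eq_self hC.2 hzC.2 ▸ hy z hzM hz
        exact absurd (hzμ ▸ le_ceil hC.2 μ) hz.2.not_ge
      · exact hy z hzM hz ▸ hzQ
    obtain ⟨z, hzM, hz⟩ := hμM y hyμ
    have hcI := (hQμ z hzM hz).1
    refine .inr (mem_biUnion hcI ((isClosed_iff_derivedSet_subset _).mp (hQ _ hcI) ?_))
    refine SuccOrder.accPt_principal.mpr ⟨hμmin, fun b hb => ?_⟩
    obtain ⟨z, hzM, hbz, hzμ⟩ := hμM (max b y) (max_lt hb hyμ)
    refine ⟨z, (hQμ z hzM ⟨(le_max_right _ _).trans_lt hbz, hzμ⟩).2, ?_, hzμ⟩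
    exact (le_max_left _ _).trans_lt hbz
  · push Not at hblock
    refine .inl (mem_inter_of_forall_exists_ceil_lt hC hW hI hQC hIW hμmin fun y hy => ?_)
    obtain ⟨z, hzM, hz, hne⟩ := hblock y hy
    refine ⟨z, hzM, hz.1, lt_of_not_ge fun h => hne ?_⟩
    exact (ceil_mono hC.2 hz.2.le).antisymm (ceil_le (ceil_mem hC.2 z) h)

lemma isCompact_inter_union_biUnion (hC : IsCub C) (hW : IsCompact W) (hI : I ⊆ C)
    (hQ : ∀ c ∈ I, IsClosed (Q c)) (hQC : ∀ c ∈ I, Q c ⊆ block C c)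
    (hIW : ∀ c ∈ I, (W ∩ block C c).Nonempty) : IsCompact (W ∩ C ∪ ⋃ c ∈ I, Q c) := by
  obtain ⟨hWc, b, hb⟩ := isCompact_iff_isClosed_bddAbove.mp hW
  refine isCompact_iff_isClosed_bddAbove.mpr
    ⟨isClosed_inter_union_biUnion hC hWc hI hQ hQC hIW, ceil C b, ?_⟩
  rintro z (hz | hz)
  · exact (hb hz.1).trans (le_ceil hC.2 b)
  · obtain ⟨c, hc, hzc⟩ := mem_iUnion₂.mp hz
    obtain ⟨w, hwW, hw⟩ := hIW c hc
    calc z ≤ c := (hQC c hc hzc).1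
      _ = ceil C w := (ceil_eq_of_mem_block hC.2 (hI hc) hw).symm
      _ ≤ ceil C b := ceil_mono hC.2 (hb hwW)

end UnionOfBlocks

structure CompactCoding (X : Set O1) where
  cover : (ℕ → ℕ) → Set O1
  isClosed_cover : ∀ f, IsClosed (cover f)
  cover_subset : ∀ f, cover f ⊆ X
  index : Set O1 → ℕ → ℕ
  subset_cover : ∀ L ⊆ X, IsCompact L → ∀ f, index L ≤ f → L ⊆ cover f

lemma exists_cofinal_seq {X : Set O1} {z : O1} (hacc : AccPt z (𝓟 X)) :
    ∃ v : ℕ → O1, Monotone v ∧ (∀ k, v k < z) ∧ ∀ y < z, ∃ k, y ≤ v k := by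
  obtain ⟨y, hy⟩ := not_isMin_iff.mp hacc.not_isMin
  obtain ⟨v, hv, hvX, hlim⟩ := exists_seq_strictMono_tendsto_of_accPt hacc hy
  exact ⟨v, hv.monotone, fun k => (hvX k).2.2, fun y hy =>
    ((hlim.eventually (lt_mem_nhds hy)).exists).imp fun _ => le_of_lt⟩

lemma exists_lt_forall_le_of_isCompact {X L : Set O1} {z : O1} (hz : ¬ IsMin z) (hzX : z ∉ X)
    (hLX : L ⊆ X) (hL : IsCompact L) : ∃ m < z, ∀ x ∈ L, x ≤ z → x ≤ m := by
  have hbdd : BddAbove (L ∩ Iic z) := bddAbove_Iic.mono inter_subset_right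
  refine ⟨sSup (L ∩ Iic z), ?_, fun x hx hxz => le_csSup hbdd ⟨hx, hxz⟩⟩
  rcases (L ∩ Iic z).eq_empty_or_nonempty with h | h
  · rw [h, csSup_empty]
    exact bot_lt_iff_ne_bot.mpr fun h => hz (h ▸ isMin_bot)
  · have hm := (hL.isClosed.inter isClosed_Iic).csSup_mem h hbdd
    exact hm.2.lt_of_ne fun h => hzX (h ▸ hLX hm.1)

lemma nonempty_compactCoding {X : Set O1} (hX : BddAbove X) : Nonempty (CompactCoding X) := by
  classical
  set D := closure X \ X
  have hD : D.Countable := by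
    obtain ⟨b, hb⟩ := hX
    exact (countable_Iic b).mono fun z hz => closure_minimal hb isClosed_Iic hz.1
  have := hD.to_subtype
  obtain ⟨e, he⟩ := Countable.exists_injective_nat D
  choose v hvmono hvlt hvcof using fun z : D => exists_cofinal_seq (accPt_of_mem_closure_sdiff z.2)
  have hidx : ∀ (L : Set O1) (z : D), ∃ k, L ⊆ X → IsCompact L → ∀ x ∈ L, x ≤ z → x ≤ v z k := by
    intro L z
    by_cases hL : L ⊆ X ∧ IsCompact L
    · obtain ⟨m, hmz, hm⟩ := exists_lt_forall_le_of_isCompact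
        (accPt_of_mem_closure_sdiff z.2).not_isMin z.2.2 hL.1 hL.2
      obtain ⟨k, hk⟩ := hvcof z m hmz
      exact ⟨k, fun _ _ x hx hxz => (hm x hx hxz).trans hk⟩
    · exact ⟨0, fun h₁ h₂ => absurd ⟨h₁, h₂⟩ hL⟩
  choose k hk using hidx
  refine ⟨⟨fun f => closure X \ ⋃ z : D, Ioc (v z (f (e z))) z,
    fun f => isClosed_closure.sdiff (isOpen_iUnion fun z => isOpen_Ioc _ _),
    fun f x hx => ?_, fun L => Function.extend e (k L) 0, fun L hLX hL f hf x hx => ?_⟩⟩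
  · by_contra hxX
    exact hx.2 (mem_iUnion.mpr ⟨⟨x, hx.1, hxX⟩, hvlt _ _, le_rfl⟩)
  · refine ⟨subset_closure (hLX hx), fun hmem => ?_⟩
    obtain ⟨z, hvx, hxz⟩ := mem_iUnion.mp hmem
    have hkf : k L z ≤ f (e z) := he.extend_apply (k L) 0 z ▸ hf (e z)
    exact hvx.not_ge ((hk L z hLX hL x hx hxz).trans (hvmono z hkf))

structure Gadget (S : Set O1) where
  top : O1
  gap : ℕ → O1
  pt : ℕ → ℕ → O1
  top_mem : top ∈ S
  gap_notMem : ∀ n, gap n ∉ S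
  gap_lt_top : ∀ n, gap n < top
  tendsto_gap : Tendsto gap atTop (𝓝 top)
  pt_mem : ∀ n k, pt n k ∈ S
  pt_lt_gap : ∀ n k, pt n k < gap n
  gap_lt_pt : ∀ m n k, m < n → gap m < pt n k
  tendsto_pt : ∀ n, Tendsto (pt n) atTop (𝓝 (gap n))

namespace Gadget

variable {S : Set O1} (G : Gadget S)

/-- The set coding `f : ℕ → ℕ`: the first `f n` points below the `n`-th gap, and the top. -/
def code (f : ℕ → ℕ) : Set O1 := insert G.top (⋃ n, G.pt n '' Iio (f n))

lemma top_mem_code (f : ℕ → ℕ) : G.top ∈ G.code f := mem_insert _ _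

lemma code_subset_of {s : Set O1} (htop : G.top ∈ s) (hpt : ∀ n k, G.pt n k ∈ s) (f : ℕ → ℕ) :
    G.code f ⊆ s :=
  insert_subset htop (iUnion_subset fun n => image_subset_iff.mpr fun k _ => hpt n k)

lemma code_subset (f : ℕ → ℕ) : G.code f ⊆ S := G.code_subset_of G.top_mem G.pt_mem f

lemma code_subset_Iic (f : ℕ → ℕ) : G.code f ⊆ Iic G.top :=
  G.code_subset_of self_mem_Iic (fun n k => (G.pt_lt_gap n k).le.trans (G.gap_lt_top n).le) f

lemma isClosed_code (f : ℕ → ℕ) : IsClosed (G.code f) := by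
  refine isClosed_of_closure_subset fun μ hμ => ?_
  have hle : μ ≤ G.top := closure_minimal (G.code_subset_Iic f) isClosed_Iic hμ
  rcases hle.lt_or_eq with hlt | rfl
  · obtain ⟨n, hn⟩ := (G.tendsto_gap.eventually (lt_mem_nhds hlt)).exists
    -- below the `n`-th gap, the code is finite
    have hfin : (Iio (G.gap n) ∩ G.code f).Finite := by
      refine ((finite_Iic n).biUnion fun m _ => (finite_Iio (f m)).image (G.pt m)).subset ?_
      rintro z ⟨hzn, rfl | hz⟩
      · exact absurd (G.gap_lt_top n) hzn.not_gt
      · obtain ⟨m, k, hk, rfl⟩ := by simpa using hz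
        exact mem_biUnion (not_lt.mp fun h => (G.gap_lt_pt n m k h).not_gt hzn)
          (mem_image_of_mem _ hk)
    exact (hfin.isClosed.closure_subset (isOpen_Iio.inter_closure ⟨hn, hμ⟩)).2
  · exact G.top_mem_code f

lemma exists_bound {K : Set O1} (hK : IsClosed K) (hKS : K ⊆ S) :
    ∃ F : ℕ → ℕ, ∀ f, G.code f ⊆ K → f ≤ F := by
  have hev : ∀ n, ∀ᶠ k in atTop, G.pt n k ∉ K := fun n =>
    not_frequently.mp fun h =>
      G.gap_notMem n (hKS (hK.mem_of_frequently_of_tendsto h (G.tendsto_pt n)))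
  choose F hF using fun n => eventually_atTop.mp (hev n)
  refine ⟨F, fun f hf n => not_lt.mp fun hlt => hF n (F n) le_rfl (hf ?_)⟩
  exact .inr (mem_iUnion.mpr ⟨n, mem_image_of_mem _ hlt⟩)

end Gadget

lemma exists_gadget {S : Set O1} {lam x : O1} (hlam : lam ∈ S ∩ derivedSet (closure S \ S))
    (hx : x < lam) : ∃ G : Gadget S, G.top = lam ∧ ∀ n k, x < G.pt n k := by
  obtain ⟨gap, hgap, hgapmem, hgaplim⟩ := exists_seq_strictMono_tendsto_of_accPt hlam.2 hx
  let lo : ℕ → O1 := fun n => Nat.rec x (fun m _ => gap m) n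
  have hlo : ∀ n, lo n < gap n ∧ x ≤ lo n ∧ ∀ m < n, gap m ≤ lo n := by
    rintro (_ | n)
    · exact ⟨(hgapmem 0).2.1, le_rfl, by simp⟩
    · exact ⟨hgap n.lt_succ_self, (hgapmem n).2.1.le, fun m hm => hgap.monotone (by omega)⟩
  choose pt hpt hptmem hptlim using fun n =>
    exists_seq_strictMono_tendsto_of_accPt (accPt_of_mem_closure_sdiff (hgapmem n).1) (hlo n).1
  refine ⟨⟨lam, gap, pt, hlam.1, fun n => (hgapmem n).1.2, fun n => (hgapmem n).2.2, hgaplim,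
    fun n k => (hptmem n k).1, fun n k => (hptmem n k).2.2,
    fun m n k hmn => ((hlo n).2.2 m hmn).trans_lt (hptmem n k).2.1, hptlim⟩, rfl,
    fun n k => (hlo n).2.1.trans_lt (hptmem n k).2.1⟩

structure Coding (S T : Set O1) where
  C : Set O1
  isCub : IsCub C
  mem_iff : ∀ c ∈ C, c ∈ S ↔ c ∈ T
  gadget : O1 → Gadget S
  code_subset_block : ∀ c ∈ C, (∃ x ∈ block C c, x < c) → ∀ f, (gadget c).code f ⊆ block C c
  coding : ∀ c, CompactCoding (T ∩ block C c)

namespace Coding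

variable {S T : Set O1} (X : Coding S T)

def support (L : Set O1) : Set O1 := {c | c ∈ X.C ∧ ∃ x ∈ L ∩ block X.C c, x < c}

def map (L : Set O1) : Set O1 :=
  L ∩ X.C ∪ ⋃ c ∈ X.support L, (X.gadget c).code ((X.coding c).index (L ∩ block X.C c))

lemma map_subset {L : Set O1} (hLT : L ⊆ T) : X.map L ⊆ S := by
  rintro z (hz | hz)
  · exact (X.mem_iff z hz.2).mpr (hLT hz.1)
  · obtain ⟨c, -, hz⟩ := mem_iUnion₂.mp hz
    exact (X.gadget c).code_subset _ hz

lemma isCompact_map {L : Set O1} (hL : IsCompact L) : IsCompact (X.map L) :=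
  isCompact_inter_union_biUnion X.isCub hL (fun _ hc => hc.1) (fun _ _ => Gadget.isClosed_code _ _)
    (fun c ⟨hc, x, hx, hxc⟩ => X.code_subset_block c hc ⟨x, hx.2, hxc⟩ _)
    (fun _ ⟨_, x, hx, _⟩ => ⟨x, hx⟩)

lemma exists_bound {K : Set O1} (hKS : K ⊆ S) (hK : IsCompact K) :
    ∃ M ⊆ T, IsCompact M ∧ ∀ L ⊆ T, IsCompact L → X.map L ⊆ K → L ⊆ M := by
  choose F hF using fun c => (X.gadget c).exists_bound hK.isClosed hKS
  set J := {c | c ∈ X.C ∧ (∃ x ∈ block X.C c, x < c) ∧ (X.gadget c).top ∈ K}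
  refine ⟨K ∩ X.C ∪ ⋃ c ∈ J, (X.coding c).cover (F c), ?_, ?_, ?_⟩
  · rintro z (hz | hz)
    · exact (X.mem_iff z hz.2).mp (hKS hz.1)
    · obtain ⟨c, -, hz⟩ := mem_iUnion₂.mp hz
      exact ((X.coding c).cover_subset _ hz).1
  · exact isCompact_inter_union_biUnion X.isCub hK (fun _ hc => hc.1)
      (fun c _ => (X.coding c).isClosed_cover _)
      (fun c _ _ hz => ((X.coding c).cover_subset _ hz).2)
      (fun c hc => ⟨_, hc.2.2, X.code_subset_block c hc.1 hc.2.1 0 ((X.gadget c).top_mem_code 0)⟩)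
  · intro L hLT hL hLK z hzL
    by_cases hzC : z ∈ X.C
    · exact .inl ⟨hLK (.inl ⟨hzL, hzC⟩), hzC⟩
    have hCu := X.isCub.2
    set c := ceil X.C z
    have hzb : z ∈ block X.C c := mem_block_ceil hCu z
    have hzc : z < c := (le_ceil hCu z).lt_of_ne fun h => hzC (h ▸ ceil_mem hCu z)
    have hc : c ∈ X.support L := ⟨ceil_mem hCu z, z, ⟨hzL, hzb⟩, hzc⟩
    -- `K` contains the code of `L ∩ block X.C c`, so the gadget bound `F c` dominates its index
    have hcode : (X.gadget c).code ((X.coding c).index (L ∩ block X.C c)) ⊆ K :=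
      fun w hw => hLK (.inr (mem_iUnion₂.mpr ⟨c, hc, hw⟩))
    have hcJ : c ∈ J := ⟨hc.1, ⟨z, hzb, hzc⟩, hcode ((X.gadget c).top_mem_code _)⟩
    refine .inr (mem_iUnion₂.mpr ⟨c, hcJ, (X.coding c).subset_cover _
      (inter_subset_inter_left _ hLT) (hL.inter_right (isClosed_block _ _)) _ (hF c _ hcode)
      ⟨hzL, hzb⟩⟩)

end Coding

lemma nonempty_coding {S T : Set O1} (hgap : ¬ BddAbove (closure S \ S)) (hS : IsStat S)
    (hST : ¬ IsStat (symmDiff S T)) : Nonempty (Coding S T) := by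
  obtain ⟨C₀, hC₀, hdisj⟩ : ∃ C₀, IsCub C₀ ∧ ¬ (symmDiff S T ∩ C₀).Nonempty := by
    simpa [IsStat] using hST
  set Λ := S ∩ derivedSet (closure S \ S)
  have hΛ : ¬ BddAbove Λ := hS.not_bddAbove_inter (isCub_derivedSet hgap)
  set C := C₀ ∩ derivedSet Λ
  have hiff : ∀ c ∈ C, c ∈ S ↔ c ∈ T := fun c hc => by
    by_contra h
    exact hdisj ⟨c, by rw [Set.mem_symmDiff]; tauto, hc.1⟩
  have hG : ∀ c, ∃ G : Gadget S,
      c ∈ C → (∃ x ∈ block C c, x < c) → ∀ f, G.code f ⊆ block C c := by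
    intro c
    by_cases h : c ∈ C ∧ ∃ x ∈ block C c, x < c
    · obtain ⟨hc, x, hx, hxc⟩ := h
      obtain ⟨lam, hlam, hxlam, hlamc⟩ := (SuccOrder.accPt_principal.mp hc.2).2 x hxc
      obtain ⟨G, rfl, hpt⟩ := exists_gadget hlam hxlam
      exact ⟨G, fun _ _ f z hz => mem_block_of_lt hx (G.code_subset_of hxlam hpt f hz)
        ((G.code_subset_Iic f hz).trans hlamc.le)⟩
    · obtain ⟨lam, hlam, hlam0⟩ := not_bddAbove_iff.mp hΛ ⊥
      obtain ⟨G, -⟩ := exists_gadget hlam hlam0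
      exact ⟨G, fun hc hx => absurd ⟨hc, hx⟩ h⟩
  choose gadget hgadget using hG
  exact ⟨⟨C, hC₀.inter (isCub_derivedSet hΛ), hiff, gadget, hgadget,
    fun c => Classical.choice (nonempty_compactCoding ⟨c, fun _ hx => hx.2.1⟩)⟩⟩

end O1

/-- If `S, T ⊆ ω₁`, `cl(S) \ S` is unbounded in `ω₁`, `S` is stationary and the symmetric
difference `S Δ T` is non-stationary, then `K(S) ≥_T K(T)`. -/
theorem statement16 (S T : Set O1)
    (h1 : ¬ BddO1 (closure S \ S))
    (h2 : IsStat S) (h3 : ¬ IsStat (symmDiff S T)) :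
    TukeyGE (KS S) (KS T) := by
  obtain ⟨X⟩ := O1.nonempty_coding h1 h2 h3
  refine tukeyGE_of_bddAbove_setOf_le
    (fun L : KS T => (⟨X.map L.1, X.map_subset L.2.1, X.isCompact_map L.2.2⟩ : KS S)) ?_
  rintro ⟨K, hKS, hK⟩
  obtain ⟨M, hMT, hM, hLM⟩ := X.exists_bound hKS hK
  exact ⟨⟨M, hMT, hM⟩, fun L hL => hLM L.1 L.2.1 L.2.2 hL⟩
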